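/- arXiv:1907.05946 — 4 statements merged into one kernel-verified Lean document; each statement's English description precedes it below -/
import Mathlib

section
/- Let q ∈ P^loglog(ℝⁿ). Then there is a constant C' > 0, depending only on n, the bound q⁺ of q, and the loglog-Hölder constant of q, such that for every cube Q ⊂ ℝⁿ and every x, y ∈ Q: (log(e + 1/|Q|))^{q(x)} ≤ C' (log(e + 1/|Q|))^{q(y)}. -/
open MeasureTheory ENNReal NNReal Set

noncomputable section

abbrev Rn (n : ℕ) := EuclideanSpace ℝ (Fin n)

namespace VarExp

variable {n : ℕ}

/-- Closed axis-parallel cube with center `c` and sidelength `l`. -/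
def cubeSet (c : Rn n) (l : ℝ) : Set (Rn n) := {x | ∀ i, |x i - c i| ≤ l / 2}

/-- Characteristic function of a set. -/
def chi (s : Set (Rn n)) : Rn n → ℝ := s.indicator fun _ => 1

/-- Average of `b` over the cube with center `c` and sidelength `l`. -/
def cavg (c : Rn n) (l : ℝ) (b : Rn n → ℝ) : ℝ := ⨍ x in cubeSet c l, b x

/-- Global log-Hölder continuity with explicit constants. -/
def LogHolderWith (p : Rn n → ℝ) (C pinf : ℝ) : Prop :=
  (∀ x y : Rn n, |p x - p y| ≤ C / Real.log (Real.exp 1 + 1 / ‖x - y‖)) ∧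
  (∀ x : Rn n, |p x - pinf| ≤ C / Real.log (Real.exp 1 + ‖x‖))

/-- Global log-Hölder continuity (the class `P^log`). -/
def LogHolder (p : Rn n → ℝ) : Prop := ∃ C pinf : ℝ, 0 < C ∧ LogHolderWith p C pinf

/-- The class `P^loglog`: bounded and loglog-Hölder continuous. -/
def LogLogHolder (q : Rn n → ℝ) : Prop :=
  (∃ M : ℝ, ∀ x, |q x| ≤ M) ∧
  ∃ C : ℝ, 0 < C ∧ ∀ x y : Rn n,
    |q x - q y| ≤ C / Real.log (Real.exp 1 + Real.log (Real.exp 1 + 1 / ‖x - y‖))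

/-- Pointwise conjugate exponent. -/
def conj (t : ℝ) : ℝ := t / (t - 1)

/-- Luxemburg norm (with values in `ℝ≥0∞`) of an `ℝ≥0∞`-valued function for a
variable exponent `p`. -/
def vnormE (p : Rn n → ℝ) (f : Rn n → ℝ≥0∞) : ℝ≥0∞ :=
  sInf {lam : ℝ≥0∞ | ∃ l : ℝ, 0 < l ∧ lam = ENNReal.ofReal l ∧
    ∫⁻ x, (f x / ENNReal.ofReal l) ^ p x ≤ 1}

/-- Variable exponent Lebesgue (Luxemburg) norm. -/
def vnorm (p : Rn n → ℝ) (f : Rn n → ℝ) : ℝ≥0∞ :=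
  vnormE p fun x => ENNReal.ofReal |f x|

/-- `φ_p(x,t)` for an extended exponent : `t^p` if `p < ∞`, and `∞·χ_{(1,∞)}(t)` if `p = ∞`. -/
def phiExp (pe : ℝ≥0∞) (t : ℝ≥0∞) : ℝ≥0∞ :=
  if pe = ⊤ then (if t ≤ 1 then 0 else ⊤) else t ^ pe.toReal

/-- Luxemburg norm for an extended (possibly infinite) variable exponent. -/
def vnormX (p : Rn n → ℝ≥0∞) (f : Rn n → ℝ) : ℝ≥0∞ :=
  sInf {lam : ℝ≥0∞ | ∃ l : ℝ, 0 < l ∧ lam = ENNReal.ofReal l ∧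
    ∫⁻ x, phiExp (p x) (ENNReal.ofReal (|f x| / l)) ≤ 1}

/-- The Musielak–Orlicz norm of the space `L^{p(·)}(log L)^{q(·)}`. -/
def llognorm (p q : Rn n → ℝ) (f : Rn n → ℝ) : ℝ≥0∞ :=
  sInf {lam : ℝ≥0∞ | ∃ l : ℝ, 0 < l ∧ lam = ENNReal.ofReal l ∧
    ∫⁻ x, ENNReal.ofReal ((|f x| / l) ^ p x *
      Real.log (Real.exp 1 + |f x| / l) ^ q x) ≤ 1}

/-- Generalized Φ-function. -/
def IsGPhi (Ψ : Rn n → ℝ → ℝ≥0∞) : Prop :=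
  (∀ t : ℝ, Measurable fun x => Ψ x t) ∧
  (∀ x, ConvexOn ℝ≥0 (Ici (0:ℝ)) (Ψ x)) ∧
  (∀ x, Ψ x 0 = 0) ∧
  (∀ x, Filter.Tendsto (Ψ x) (nhdsWithin 0 (Ioi 0)) (nhds 0)) ∧
  (∀ x, Filter.Tendsto (Ψ x) Filter.atTop (nhds ⊤))

/-- Luxemburg norm associated to a generalized Φ-function. -/
def gnorm (Ψ : Rn n → ℝ → ℝ≥0∞) (f : Rn n → ℝ) : ℝ≥0∞ :=
  sInf {lam : ℝ≥0∞ | ∃ l : ℝ, 0 < l ∧ lam = ENNReal.ofReal l ∧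
    ∫⁻ x, Ψ x (|f x| / l) ≤ 1}

/-- Generalized inverse of a generalized Φ-function. -/
def ginv (Ψ : Rn n → ℝ → ℝ≥0∞) (x : Rn n) (t : ℝ≥0∞) : ℝ :=
  sInf {u : ℝ | 0 ≤ u ∧ t ≤ Ψ x u}

/-- Conjugate (Legendre transform) of a generalized Φ-function. -/
def gconj (Ψ : Rn n → ℝ → ℝ≥0∞) (x : Rn n) (u : ℝ) : ℝ≥0∞ :=
  ⨆ t : Ici (0:ℝ), ENNReal.ofReal (t.1 * u) - Ψ x t.1

/-- Condition 𝓕 on a triple of generalized Φ-functions. -/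
def CondF (A B D : Rn n → ℝ → ℝ≥0∞) : Prop :=
  ∃ C : ℝ, 0 < C ∧
    (∀ (c : Rn n) (l : ℝ), 0 < l →
      gnorm A (chi (cubeSet c l)) * gnorm B (chi (cubeSet c l)) ≤
        ENNReal.ofReal C * gnorm D (chi (cubeSet c l))) ∧
    (∀ (x : Rn n) (t : ℝ≥0∞), ginv A x t * ginv B x t ≤ C * ginv D x t) ∧
    (∀ (c : Rn n) (l : ℝ), 0 < l →
      gnorm D (chi (cubeSet c l)) * gnorm (gconj D) (chi (cubeSet c l)) ≤
        ENNReal.ofReal (C * l ^ n))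

/-- Maximal operator associated to a generalized Φ-function. -/
def gmax (Ψ : Rn n → ℝ → ℝ≥0∞) (f : Rn n → ℝ) (x : Rn n) : ℝ≥0∞ :=
  ⨆ (c : Rn n) (l : ℝ) (_ : 0 < l) (_ : x ∈ cubeSet c l),
    gnorm Ψ ((cubeSet c l).indicator f) / gnorm Ψ (chi (cubeSet c l))

/-- Fractional maximal operator associated to a generalized Φ-function, where the
fractional exponent `β` is allowed to take the value `∞`. -/
def gmaxFrac (β : Rn n → ℝ≥0∞) (Ψ : Rn n → ℝ → ℝ≥0∞) (f : Rn n → ℝ) (x : Rn n) : ℝ≥0∞ :=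
  ⨆ (c : Rn n) (l : ℝ) (_ : 0 < l) (_ : x ∈ cubeSet c l),
    vnormX β (chi (cubeSet c l)) *
      gnorm Ψ ((cubeSet c l).indicator f) / gnorm Ψ (chi (cubeSet c l))

/-- `φ_{a,b}(t) = t^a (log(e+t))^b`. -/
def phiab (a b t : ℝ) : ℝ := t ^ a * Real.log (Real.exp 1 + t) ^ b

/-- Generalized inverse of `φ_{a,b}`. -/
def phiInv (a b s : ℝ) : ℝ := sInf {u : ℝ | 0 ≤ u ∧ s ≤ phiab a b u}

/-- The annulus `{x : r < ‖x‖ ≤ R}`. -/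
def annulus (r R : ℝ) : Set (Rn n) := {x | r < ‖x‖ ∧ ‖x‖ ≤ R}

/-- `K̄(t) = ess sup_{t<|x|≤2t} K(x)`. -/
def Kbar (K : Rn n → ℝ) (t : ℝ) : ℝ≥0∞ :=
  essSup (fun x => ENNReal.ofReal (K x)) (volume.restrict (annulus t (2 * t)))

/-- `K̃(t) = ∫_{|z|≤t} K(z) dz`. -/
def Ktilde (K : Rn n → ℝ) (t : ℝ) : ℝ :=
  ∫ z in {z : Rn n | ‖z‖ ≤ t}, K z

/-- The class 𝔇 of kernels, with explicit parameters `c`, `δ`, `ε`. -/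
def ClassDWith (K : Rn n → ℝ) (c δ ε : ℝ) : Prop :=
  LocallyIntegrable K ∧ (∀ x, 0 ≤ K x) ∧
  0 < c ∧ 0 < δ ∧ 0 ≤ ε ∧ ε < 1 ∧
  ∀ k : ℤ,
    essSup (fun x => ENNReal.ofReal (K x))
        (volume.restrict (annulus ((2:ℝ) ^ k) ((2:ℝ) ^ (k+1)))) ≤
      ENNReal.ofReal ((c / (2:ℝ) ^ (k * (n:ℤ))) *
        ∫ y in annulus (δ * (1-ε) * (2:ℝ) ^ k) (2 * δ * (1+ε) * (2:ℝ) ^ k), K y)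

/-- The class 𝔇 of kernels. -/
def ClassD (K : Rn n → ℝ) : Prop := ∃ c δ ε : ℝ, ClassDWith K c δ ε

/-- The half-open dyadic cube `2^{-k}([0,1)^n + m)`. -/
def dyadicSet (k : ℤ) (m : Fin n → ℤ) : Set (Rn n) :=
  {x | ∀ i, (m i : ℝ) * (2:ℝ) ^ (-k) ≤ x i ∧ x i < ((m i : ℝ) + 1) * (2:ℝ) ^ (-k)}

/-- The center of the dyadic cube `2^{-k}([0,1)^n + m)`. -/
def dyadicCenter (k : ℤ) (m : Fin n → ℤ) : Rn n :=
  (WithLp.equiv 2 (Fin n → ℝ)).symm fun i => ((m i : ℝ) + 1 / 2) * (2:ℝ) ^ (-k)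

end VarExp

/-! Write `L = log(e + |Q|⁻¹)` and `T = log(e + log(e + 1/|x - y|))`. Since `|x - y| ≲ |Q|^{1/n}`,
`L ≲ log(e + 1/|x - y|)`, so `log L ≤ a + T` for a constant `a = a(n)`. The loglog-Hölder bound
`q x - q y ≤ C / T` then gives `(q x - q y) log L ≤ C (a + 1)` because `T ≥ 1`, and
`L^{q x} = L^{q x - q y} L^{q y} ≤ e^{C (a + 1)} L^{q y}`. -/

open Real

lemma one_le_log_exp_one_add {t : ℝ} (ht : 0 ≤ t) : 1 ≤ log (exp 1 + t) :=
  calc (1 : ℝ) = log (exp 1) := (log_exp 1).symm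
    _ ≤ log (exp 1 + t) := log_le_log (exp_pos 1) (by linarith)

lemma exp_one_add_mul_pow_le {k t : ℝ} (hk : 0 ≤ k) (ht : 0 ≤ t) (m : ℕ) :
    exp 1 + k * t ^ m ≤ (exp 1 + k) * (exp 1 + t) ^ m := by
  have h1 : 1 ≤ (exp 1 + t) ^ m := one_le_pow₀ (by linarith [add_one_le_exp (1 : ℝ)])
  have h2 : t ^ m ≤ (exp 1 + t) ^ m := pow_le_pow_left₀ ht (by linarith [exp_pos 1]) m
  nlinarith [exp_pos 1]

lemma log_exp_one_add_mul_pow_le {k t : ℝ} (hk : 0 ≤ k) (ht : 0 ≤ t) (m : ℕ) :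
    log (exp 1 + k * t ^ m) ≤ (log (exp 1 + k) + m) * log (exp 1 + t) := by
  have hk1 := one_le_log_exp_one_add hk
  have ht1 := one_le_log_exp_one_add ht
  calc log (exp 1 + k * t ^ m) ≤ log ((exp 1 + k) * (exp 1 + t) ^ m) :=
        log_le_log (by positivity) (exp_one_add_mul_pow_le hk ht m)
    _ = log (exp 1 + k) + m * log (exp 1 + t) := by
        rw [log_mul (by positivity) (by positivity), Real.log_pow]
    _ ≤ (log (exp 1 + k) + m) * log (exp 1 + t) := by nlinarith

lemma log_log_exp_one_add_mul_pow_le {k t : ℝ} (hk : 0 ≤ k) (ht : 0 ≤ t) (m : ℕ) :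
    log (log (exp 1 + k * t ^ m)) ≤
      log (log (exp 1 + k) + m) + log (exp 1 + log (exp 1 + t)) := by
  have hk1 := one_le_log_exp_one_add hk
  have ht1 := one_le_log_exp_one_add ht
  calc log (log (exp 1 + k * t ^ m)) ≤ log ((log (exp 1 + k) + m) * log (exp 1 + t)) :=
        log_le_log (by linarith [one_le_log_exp_one_add (by positivity : 0 ≤ k * t ^ m)])
          (log_exp_one_add_mul_pow_le hk ht m)
    _ = log (log (exp 1 + k) + m) + log (log (exp 1 + t)) :=
        log_mul (by positivity) (by positivity)
    _ ≤ _ := by gcongr; linarith [exp_pos 1]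

lemma mul_le_of_le_div_of_le_add {d u C a T : ℝ} (hC : 0 ≤ C) (ha : 0 ≤ a) (hT : 1 ≤ T)
    (hd : d ≤ C / T) (hu0 : 0 ≤ u) (hu : u ≤ a + T) : d * u ≤ C * (a + 1) := by
  have hT0 : 0 < T := by linarith
  calc d * u ≤ C / T * (a + T) := mul_le_mul hd hu hu0 (by positivity)
    _ = C / T * a + C := by field_simp
    _ ≤ C * a + C := by gcongr; exact div_le_self hC hT
    _ = C * (a + 1) := by ring

lemma rpow_le_exp_mul_rpow {L p q K : ℝ} (hL : 0 < L) (h : (p - q) * log L ≤ K) :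
    L ^ p ≤ exp K * L ^ q :=
  calc L ^ p = L ^ (p - q) * L ^ q := by rw [← rpow_add hL, sub_add_cancel]
    _ ≤ exp K * L ^ q := by
        gcongr
        rw [rpow_def_of_pos hL, mul_comm]
        exact exp_le_exp.mpr h

namespace VarExp

variable {n : ℕ}

lemma norm_sub_le_of_mem_cubeSet {c x y : Rn n} {l : ℝ} (hl : 0 ≤ l)
    (hx : x ∈ cubeSet c l) (hy : y ∈ cubeSet c l) : ‖x - y‖ ≤ √n * l := by
  have hcoord (i : Fin n) : |x i - y i| ≤ l := by
    have hxi := abs_le.mp (hx i)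
    have hyi := abs_le.mp (hy i)
    exact abs_le.mpr ⟨by linarith, by linarith⟩
  rw [EuclideanSpace.norm_eq, ← sqrt_sq hl, ← sqrt_mul (Nat.cast_nonneg n)]
  gcongr
  calc ∑ i, ‖(x - y) i‖ ^ 2 ≤ ∑ _i : Fin n, l ^ 2 := by
        gcongr with i
        rw [PiLp.sub_apply, norm_eq_abs]
        exact hcoord i
    _ = n * l ^ 2 := by simp

lemma one_div_pow_le_of_mem_cubeSet {c x y : Rn n} {l : ℝ} (hl : 0 < l)
    (hx : x ∈ cubeSet c l) (hy : y ∈ cubeSet c l) (hxy : x ≠ y) :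
    1 / l ^ n ≤ √n ^ n * (1 / ‖x - y‖) ^ n := by
  have hD : 0 < ‖x - y‖ := norm_sub_pos_iff.mpr hxy
  have h : 1 / l ≤ √n / ‖x - y‖ := by
    rw [div_le_div_iff₀ hl hD, one_mul]
    exact norm_sub_le_of_mem_cubeSet hl.le hx hy
  calc 1 / l ^ n = (1 / l) ^ n := by rw [one_div_pow]
    _ ≤ (√n / ‖x - y‖) ^ n := by gcongr
    _ = √n ^ n * (1 / ‖x - y‖) ^ n := by rw [← mul_pow, mul_one_div]

lemma sub_mul_log_log_le_of_mem_cubeSet {q : Rn n → ℝ} {C : ℝ} (hC : 0 ≤ C)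
    (hq : ∀ x y : Rn n,
      |q x - q y| ≤ C / Real.log (Real.exp 1 + Real.log (Real.exp 1 + 1 / ‖x - y‖)))
    {c x y : Rn n} {l : ℝ} (hl : 0 < l) (hx : x ∈ cubeSet c l) (hy : y ∈ cubeSet c l) :
    (q x - q y) * Real.log (Real.log (Real.exp 1 + 1 / l ^ n)) ≤
      C * (Real.log (Real.log (Real.exp 1 + √n ^ n) + n) + 1) := by
  have ha : 0 ≤ Real.log (Real.log (Real.exp 1 + √n ^ n) + n) :=
    log_nonneg (by linarith [one_le_log_exp_one_add (by positivity : (0 : ℝ) ≤ √n ^ n),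
      Nat.cast_nonneg (α := ℝ) n])
  rcases eq_or_ne x y with rfl | hxy
  · rw [sub_self, zero_mul]
    exact mul_nonneg hC (by linarith)
  have hL := one_le_log_exp_one_add (by positivity : (0 : ℝ) ≤ 1 / l ^ n)
  have hS := one_le_log_exp_one_add (by positivity : (0 : ℝ) ≤ 1 / ‖x - y‖)
  refine mul_le_of_le_div_of_le_add hC ha (one_le_log_exp_one_add (by linarith))
    (abs_le.mp (hq x y)).2 (log_nonneg hL) ?_
  calc Real.log (Real.log (Real.exp 1 + 1 / l ^ n))
      ≤ Real.log (Real.log (Real.exp 1 + √n ^ n * (1 / ‖x - y‖) ^ n)) := by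
        gcongr
        exact one_div_pow_le_of_mem_cubeSet hl hx hy hxy
    _ ≤ _ := log_log_exp_one_add_mul_pow_le (by positivity) (by positivity) n

end VarExp

open VarExp in
/-- for `q ∈ P^loglog`, `(log(e+1/|Q|))^{q(x)} ≃ (log(e+1/|Q|))^{q(y)}`
for `x, y` in a cube `Q`. -/
theorem statement4 (n : ℕ) (q : Rn n → ℝ) (hq : LogLogHolder q) :
    ∃ C' : ℝ, 0 < C' ∧ ∀ (c : Rn n) (l : ℝ), 0 < l →
      ∀ x ∈ cubeSet c l, ∀ y ∈ cubeSet c l,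
        Real.log (Real.exp 1 + 1 / l ^ n) ^ q x ≤
          C' * Real.log (Real.exp 1 + 1 / l ^ n) ^ q y := by
  obtain ⟨-, C, hC, hHolder⟩ := hq
  refine ⟨Real.exp (C * (Real.log (Real.log (Real.exp 1 + √n ^ n) + n) + 1)), exp_pos _, ?_⟩
  intro c l hl x hx y hy
  have hL := one_le_log_exp_one_add (by positivity : (0 : ℝ) ≤ 1 / l ^ n)
  exact rpow_le_exp_mul_rpow (by linarith)
    (sub_mul_log_log_le_of_mem_cubeSet hC.le hHolder hl hx hy)
end
end

section
/- Let p ∈ P^log(ℝⁿ) with 1 ≤ p(x) ≤ p⁺ < ∞ and let q ∈ P^loglog(ℝⁿ) be nonnegative. Then there is a constant C > 0, depending only on n and the constants and bounds of p and q, such that for every cube Q ⊂ ℝⁿ: φ^{-1}_{1/(1/p)_Q, (q/p)_Q/(1/p)_Q}(1/|Q|) ≤ C ⨍_Q φ^{-1}_{p(x), q(x)}(1/|Q|) dx, where (1/p)_Q = ⨍_Q 1/p and (q/p)_Q = ⨍_Q q/p. -/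
open MeasureTheory ENNReal NNReal Set

noncomputable section

/-!
With `L = log (e + s)`, `φ⁻¹_{a,b}(s)` is comparable to `s^{1/a} L^{-b/a}`, with constants depending
only on bounds for `a ≥ 1` and `b ≥ 0`. Hence the integrand on the right is at least
`2^{-M} exp (log s / p(x) - log L · q(x) / p(x))`, and by Jensen's inequality for `exp` its
average dominates `s^{(1/p)_Q} L^{-(q/p)_Q}`, which bounds the left-hand side. That last bound
needs `log (e + s^A L^{-B}) ≳ L` uniformly for `A ≥ 1/p⁺` and `0 ≤ B ≤ sup q`, which holds because
`log L` is negligible against `L`.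
-/

open Real Filter Topology

namespace VarExp

lemma one_le_log_exp_add {t : ℝ} (ht : 0 ≤ t) : 1 ≤ Real.log (Real.exp 1 + t) := by
  rw [le_log_iff_exp_le (by positivity)]
  linarith

lemma log_exp_add_le_two_add_log_max {s : ℝ} (hs : 0 ≤ s) :
    Real.log (Real.exp 1 + s) ≤ 2 + Real.log (max 1 s) := by
  have he : 2 ≤ Real.exp 1 := by linarith [add_one_le_exp (1 : ℝ)]
  have hm : 1 ≤ max 1 s := le_max_left 1 s
  calc Real.log (Real.exp 1 + s) ≤ Real.log (Real.exp 2 * max 1 s) := by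
        refine Real.log_le_log (by positivity) ?_
        rw [show (2 : ℝ) = 1 + 1 by norm_num, exp_add]
        nlinarith [mul_le_mul_of_nonneg_right he (by positivity : (0 : ℝ) ≤ max 1 s),
          mul_le_mul_of_nonneg_left hm (exp_pos 1).le, le_max_right 1 s]
  _ = 2 + Real.log (max 1 s) := by
        rw [Real.log_mul (exp_pos 2).ne' (zero_lt_one.trans_le hm).ne', Real.log_exp]

lemma log_exp_add_le_two_mul_log_exp_add {s u : ℝ} (hs : 0 ≤ s) (hu : 0 ≤ u)
    (hus : u ≤ max 1 s) : Real.log (Real.exp 1 + u) ≤ 2 * Real.log (Real.exp 1 + s) := by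
  have he : 2 ≤ Real.exp 1 := by linarith [add_one_le_exp (1 : ℝ)]
  calc Real.log (Real.exp 1 + u) ≤ Real.log ((Real.exp 1 + s) ^ 2) := by
        refine Real.log_le_log (by positivity) ?_
        have h2 : 2 ≤ Real.exp 1 + s := by linarith
        nlinarith [mul_le_mul_of_nonneg_right h2 (by positivity : (0 : ℝ) ≤ Real.exp 1 + s),
          max_le (by linarith : (1 : ℝ) ≤ 1 + s) (by linarith : s ≤ 1 + s)]
  _ = 2 * Real.log (Real.exp 1 + s) := by rw [Real.log_pow]; norm_num

lemma monotoneOn_phiab {a b : ℝ} (ha : 0 ≤ a) (hb : 0 ≤ b) : MonotoneOn (phiab a b) (Ici 0) :=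
  fun u hu v _ huv ↦ mul_le_mul (rpow_le_rpow hu huv ha)
    (rpow_le_rpow (by linarith [one_le_log_exp_add hu])
      (Real.log_le_log (by linarith [exp_pos 1, mem_Ici.1 hu]) (by linarith)) hb)
    (rpow_nonneg (by linarith [one_le_log_exp_add hu]) b) (rpow_nonneg (le_trans hu huv) a)

lemma continuousOn_phiab {a : ℝ} (b : ℝ) (ha : 0 ≤ a) : ContinuousOn (phiab a b) (Ici 0) := by
  have hlog : ∀ u ∈ Ici (0 : ℝ), 0 < Real.log (Real.exp 1 + u) := fun u hu ↦
    zero_lt_one.trans_le (one_le_log_exp_add hu)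
  refine (continuousOn_id.rpow_const fun _ _ ↦ Or.inr ha).mul
    (ContinuousOn.rpow_const ?_ fun u hu ↦ Or.inl (hlog u hu).ne')
  exact ContinuousOn.log (by fun_prop) fun u hu ↦ by linarith [exp_pos 1, mem_Ici.1 hu]

lemma le_phiab_max_one {a b : ℝ} (s : ℝ) (ha : 1 ≤ a) (hb : 0 ≤ b) :
    s ≤ phiab a b (max 1 s) := by
  have hm : 1 ≤ max 1 s := le_max_left 1 s
  calc s ≤ max 1 s := le_max_right 1 s
  _ ≤ max 1 s ^ a * 1 := by rw [mul_one]; exact self_le_rpow_of_one_le hm ha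
  _ ≤ phiab a b (max 1 s) :=
      mul_le_mul_of_nonneg_left (one_le_rpow (one_le_log_exp_add (by linarith)) hb)
        (by positivity)

lemma phiInv_nonneg (a b s : ℝ) : 0 ≤ phiInv a b s :=
  Real.sInf_nonneg fun _ hu ↦ hu.1

lemma phiInv_le_of_le_phiab {a b s u : ℝ} (hu : 0 ≤ u) (h : s ≤ phiab a b u) :
    phiInv a b s ≤ u :=
  csInf_le ⟨0, fun _ hv ↦ hv.1⟩ ⟨hu, h⟩

lemma phiInv_le_iff {a b s u : ℝ} (ha : 1 ≤ a) (hb : 0 ≤ b) (hu : 0 ≤ u) :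
    phiInv a b s ≤ u ↔ s ≤ phiab a b u := by
  refine ⟨fun h ↦ ?_, phiInv_le_of_le_phiab hu⟩
  have hclosed : IsClosed {u : ℝ | 0 ≤ u ∧ s ≤ phiab a b u} :=
    (continuousOn_phiab b (by linarith)).preimage_isClosed_of_isClosed isClosed_Ici isClosed_Ici
  have hmem := hclosed.csInf_mem ⟨max 1 s, by positivity, le_phiab_max_one s ha hb⟩
    ⟨0, fun _ hv ↦ hv.1⟩
  exact hmem.2.trans (monotoneOn_phiab (by linarith) hb hmem.1 hu h)

lemma phiInv_le_max_one {a b : ℝ} (s : ℝ) (ha : 1 ≤ a) (hb : 0 ≤ b) : phiInv a b s ≤ max 1 s :=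
  phiInv_le_of_le_phiab (by positivity) (le_phiab_max_one s ha hb)

lemma measurable_phiInv {α : Type*} [MeasurableSpace α] {p q : α → ℝ} (hp : Measurable p)
    (hq : Measurable q) (hp1 : ∀ x, 1 ≤ p x) (hq0 : ∀ x, 0 ≤ q x) (s : ℝ) :
    Measurable fun x ↦ phiInv (p x) (q x) s := by
  refine measurable_of_Iic fun t ↦ ?_
  rcases lt_or_ge t 0 with ht | ht
  · convert MeasurableSet.empty
    exact eq_empty_of_forall_notMem fun x hx ↦ (phiInv_nonneg _ _ _).not_gt (hx.trans_lt ht)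
  · have : (fun x ↦ phiInv (p x) (q x) s) ⁻¹' Iic t = {x | s ≤ phiab (p x) (q x) t} :=
      ext fun x ↦ phiInv_le_iff (hp1 x) (hq0 x) ht
    rw [this]
    exact measurableSet_le measurable_const (by unfold phiab; fun_prop)

lemma rpow_mul_two_mul_log_rpow_le_phiInv {a b s : ℝ} (ha : 1 ≤ a) (hb : 0 ≤ b) (hs : 0 < s) :
    s ^ (1 / a) * (2 * Real.log (Real.exp 1 + s)) ^ (-(b / a)) ≤ phiInv a b s := by
  set L := Real.log (Real.exp 1 + s)
  have hL : 0 < 2 * L := by linarith [one_le_log_exp_add hs.le]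
  refine le_csInf ⟨max 1 s, by positivity, le_phiab_max_one s ha hb⟩ ?_
  rintro u ⟨hu0, hsu⟩
  -- below `max 1 s` the logarithmic factor is at most `2 L`; above it the bound holds trivially
  rcases le_or_gt u (max 1 s) with hu | hu
  · have hlog := log_exp_add_le_two_mul_log_exp_add hs.le hu0 hu
    have hsu' : s * (2 * L) ^ (-b) ≤ u ^ a := by
      rw [rpow_neg hL.le, ← div_eq_mul_inv, div_le_iff₀ (by positivity)]
      exact hsu.trans (mul_le_mul_of_nonneg_left
        (rpow_le_rpow (by linarith [one_le_log_exp_add hu0]) hlog hb) (by positivity))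
    calc s ^ (1 / a) * (2 * L) ^ (-(b / a)) = (s * (2 * L) ^ (-b)) ^ (1 / a) := by
          rw [mul_rpow hs.le (by positivity), ← rpow_mul hL.le]; ring_nf
    _ ≤ (u ^ a) ^ (1 / a) := rpow_le_rpow (by positivity) hsu' (by positivity)
    _ = u := by rw [← rpow_mul hu0, mul_one_div_cancel (by positivity), Real.rpow_one]
  · calc s ^ (1 / a) * (2 * L) ^ (-(b / a)) ≤ s ^ (1 / a) :=
          mul_le_of_le_one_right (by positivity) (rpow_le_one_of_one_le_of_nonpos
            (by linarith [one_le_log_exp_add hs.le]) (neg_nonpos.2 (by positivity)))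
    _ ≤ max 1 s ^ (1 / a) := rpow_le_rpow hs.le (le_max_right 1 s) (by positivity)
    _ ≤ max 1 s :=
          rpow_le_self_of_one_le (le_max_left 1 s) ((div_le_one (by positivity)).2 ha)
    _ ≤ u := hu.le

lemma rpow_mul_log_rpow_le_two_rpow_mul_phiInv {a b s M : ℝ} (ha : 1 ≤ a) (hb : 0 ≤ b)
    (hbM : b / a ≤ M) (hs : 0 < s) :
    s ^ (1 / a) * Real.log (Real.exp 1 + s) ^ (-(b / a)) ≤ 2 ^ M * phiInv a b s := by
  have hL : 0 ≤ Real.log (Real.exp 1 + s) := by linarith [one_le_log_exp_add hs.le]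
  calc s ^ (1 / a) * Real.log (Real.exp 1 + s) ^ (-(b / a))
      = 2 ^ (b / a) * (s ^ (1 / a) * (2 * Real.log (Real.exp 1 + s)) ^ (-(b / a))) := by
        rw [mul_rpow zero_le_two hL, rpow_neg zero_le_two]
        field_simp
  _ ≤ 2 ^ M * phiInv a b s :=
        mul_le_mul (Real.rpow_le_rpow_of_exponent_le one_le_two hbM)
          (rpow_mul_two_mul_log_rpow_le_phiInv ha hb hs) (by positivity) (by positivity)

lemma phiInv_one_div_le {A B N c s : ℝ} (hA : 0 < A) (hB : 0 ≤ B) (hBN : B ≤ N) (hc0 : 0 < c)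
    (hc1 : c ≤ 1) (hs : 0 < s)
    (h : c * Real.log (Real.exp 1 + s) ≤
      Real.log (Real.exp 1 + s ^ A * Real.log (Real.exp 1 + s) ^ (-B))) :
    phiInv (1 / A) (B / A) s ≤
      c ^ (-N) * (s ^ A * Real.log (Real.exp 1 + s) ^ (-B)) := by
  set L := Real.log (Real.exp 1 + s)
  set E := s ^ A * L ^ (-B)
  have hL : 0 < L := by linarith [one_le_log_exp_add hs.le]
  have hE : 0 < E := by positivity
  have hu : 0 < c ^ (-N) * E := by positivity
  have hcN : 1 ≤ c ^ (-N) := one_le_rpow_of_pos_of_le_one_of_nonpos hc0 hc1 (by linarith)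
  have hcL : c * L ≤ Real.log (Real.exp 1 + c ^ (-N) * E) :=
    h.trans (Real.log_le_log (by positivity) (by nlinarith))
  have key : s ^ A ≤ c ^ (-N) * E * (c * L) ^ B :=
    calc s ^ A ≤ c ^ (B - N) * s ^ A :=
          le_mul_of_one_le_left (by positivity)
            (one_le_rpow_of_pos_of_le_one_of_nonpos hc0 hc1 (by linarith))
    _ = c ^ (-N) * E * (c * L) ^ B := by
          simp only [E]
          rw [mul_rpow hc0.le hL.le, rpow_sub hc0, rpow_neg hc0.le, rpow_neg hL.le]
          field_simp
  refine phiInv_le_of_le_phiab hu.le ?_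
  calc s = (s ^ A) ^ (1 / A) := by
        rw [← rpow_mul hs.le, mul_one_div_cancel hA.ne', Real.rpow_one]
  _ ≤ (c ^ (-N) * E * (c * L) ^ B) ^ (1 / A) := rpow_le_rpow (by positivity) key (by positivity)
  _ = (c ^ (-N) * E) ^ (1 / A) * (c * L) ^ (B / A) := by
        rw [mul_rpow hu.le (by positivity), ← rpow_mul (by positivity)]; ring_nf
  _ ≤ phiab (1 / A) (B / A) (c ^ (-N) * E) :=
        mul_le_mul_of_nonneg_left (rpow_le_rpow (by positivity) hcL (by positivity))
          (by positivity)

lemma exists_mul_log_le_log_exp_add_rpow_mul_rpow {P M : ℝ} (hP : 1 ≤ P) (hM : 0 ≤ M) :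
    ∃ c, 0 < c ∧ c ≤ 1 ∧ ∀ s A B, 0 < s → 1 / P ≤ A → B ≤ M →
      c * Real.log (Real.exp 1 + s) ≤
        Real.log (Real.exp 1 + s ^ A * Real.log (Real.exp 1 + s) ^ (-B)) := by
  set k := 2 * P * M + 1
  set K := 2 / P + M * Real.log k
  have hk : 1 ≤ k := by have := mul_nonneg (by positivity : (0 : ℝ) ≤ 2 * P) hM; linarith
  have hK : 0 ≤ K := add_nonneg (by positivity) (mul_nonneg hM (Real.log_nonneg hk))
  refine ⟨1 / (2 * P * (1 + K)), by positivity, ?_, fun s A B hs hA hBM ↦ ?_⟩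
  · rw [div_le_one (by positivity)]; nlinarith
  set L := Real.log (Real.exp 1 + s)
  have hL : 1 ≤ L := one_le_log_exp_add hs.le
  have hE : 1 ≤ Real.log (Real.exp 1 + s ^ A * L ^ (-B)) :=
    one_le_log_exp_add (by positivity)
  -- `max 1 (x - K) ≥ x / (1 + K)`
  suffices h : L / (2 * P) - K ≤ Real.log (Real.exp 1 + s ^ A * L ^ (-B)) by
    rw [show 1 / (2 * P * (1 + K)) * L = L / (2 * P) / (1 + K) by field_simp]
    rcases le_or_gt (L / (2 * P)) (1 + K) with hx | hx
    · exact ((div_le_one (by positivity)).2 hx).trans hE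
    · refine le_trans ?_ h
      rw [div_le_iff₀ (by positivity)]
      nlinarith
  -- `log L ≤ L / k + log k`, so the loss `M log L` costs only half of `L / P`
  have hlogL : M * Real.log L ≤ L / (2 * P) + M * Real.log k := by
    have h1 : Real.log L ≤ L / k + Real.log k := by
      have := Real.log_le_sub_one_of_pos (show 0 < L / k by positivity)
      rw [Real.log_div (by positivity) (by positivity)] at this
      linarith
    have h2 : M * (L / k) ≤ L / (2 * P) := by
      rw [mul_div_assoc', div_le_div_iff₀ (by positivity) (by positivity)]
      nlinarith
    nlinarith
  rcases le_or_gt s 1 with hs1 | hs1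
  · have hL2 : L ≤ 2 := by
      simpa [max_eq_left hs1] using log_exp_add_le_two_add_log_max hs.le
    have : L / (2 * P) ≤ 1 := by rw [div_le_one (by positivity)]; linarith
    linarith
  · have hlogs : 0 < Real.log s := Real.log_pos hs1
    have hLP : L / P = 2 * (L / (2 * P)) := by field_simp
    have hLs : L ≤ 2 + Real.log s := by
      simpa [max_eq_right hs1.le] using log_exp_add_le_two_add_log_max hs.le
    calc L / (2 * P) - K ≤ Real.log s / P - M * Real.log L := by
          have : (L - 2) / P ≤ Real.log s / P := by gcongr; linarith
          rw [_root_.sub_div] at this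
          linarith
    _ ≤ A * Real.log s - B * Real.log L := by
          have h1 := mul_le_mul_of_nonneg_right hA hlogs.le
          have h2 := mul_le_mul_of_nonneg_right hBM (Real.log_nonneg hL)
          rw [one_div_mul_eq_div] at h1
          linarith
    _ = Real.log (s ^ A * L ^ (-B)) := by
          rw [Real.log_mul (by positivity) (by positivity), Real.log_rpow hs,
            Real.log_rpow (by positivity)]
          ring
    _ ≤ Real.log (Real.exp 1 + s ^ A * L ^ (-B)) :=
          Real.log_le_log (by positivity) (by linarith [exp_pos 1])

lemma exists_phiInv_one_div_le {P M : ℝ} (hP : 1 ≤ P) (hM : 0 ≤ M) :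
    ∃ C, 0 < C ∧ ∀ s A B, 0 < s → 1 / P ≤ A → 0 ≤ B → B ≤ M →
      phiInv (1 / A) (B / A) s ≤ C * (s ^ A * Real.log (Real.exp 1 + s) ^ (-B)) := by
  obtain ⟨c, hc0, hc1, hc⟩ := exists_mul_log_le_log_exp_add_rpow_mul_rpow hP hM
  exact ⟨c ^ (-M), by positivity, fun s A B hs hA hB hBM ↦
    phiInv_one_div_le ((by positivity : (0 : ℝ) < 1 / P).trans_le hA) hB hBM hc0 hc1 hs
      (hc s A B hs hA hBM)⟩

lemma rpow_integral_mul_rpow_neg_integral_le {α : Type*} [MeasurableSpace α] {μ : Measure α}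
    [IsProbabilityMeasure μ] {u v : α → ℝ} {s L : ℝ} (hs : 0 < s) (hL : 0 < L)
    (hu : Integrable u μ) (hv : Integrable v μ)
    (hi : Integrable (fun x ↦ s ^ u x * L ^ (-v x)) μ) :
    s ^ (∫ x, u x ∂μ) * L ^ (-∫ x, v x ∂μ) ≤ ∫ x, s ^ u x * L ^ (-v x) ∂μ := by
  have hexp : ∀ a b : ℝ, s ^ a * L ^ (-b) = Real.exp (Real.log s * a - Real.log L * b) := by
    intro a b
    rw [rpow_def_of_pos hs, rpow_def_of_pos hL, ← Real.exp_add]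
    ring_nf
  have hw : Integrable (fun x ↦ Real.log s * u x - Real.log L * v x) μ :=
    (hu.const_mul _).sub (hv.const_mul _)
  simp only [hexp] at hi ⊢
  have := convexOn_exp.map_integral_le continuousOn_exp isClosed_univ (by simp) hw hi
  rwa [integral_sub (hu.const_mul _) (hv.const_mul _), integral_const_mul,
    integral_const_mul] at this

theorem exists_phiInv_integral_le {α : Type*} [MeasurableSpace α] {P M : ℝ} (hP : 1 ≤ P)
    (hM : 0 ≤ M) :
    ∃ C, 0 < C ∧ ∀ (μ : Measure α) [IsProbabilityMeasure μ] (p q : α → ℝ),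
      Measurable p → Measurable q → (∀ x, 1 ≤ p x ∧ p x ≤ P) → (∀ x, 0 ≤ q x ∧ q x ≤ M) →
      ∀ s, 0 < s →
        phiInv (1 / ∫ x, 1 / p x ∂μ) ((∫ x, q x / p x ∂μ) / ∫ x, 1 / p x ∂μ) s ≤
          C * ∫ x, phiInv (p x) (q x) s ∂μ := by
  obtain ⟨C, hC0, hC⟩ := exists_phiInv_one_div_le hP hM
  refine ⟨C * 2 ^ M, by positivity, fun μ _ p q hp hq hpP hqM s hs ↦ ?_⟩
  set L := Real.log (Real.exp 1 + s)
  have hL : 0 < L := by linarith [one_le_log_exp_add hs.le]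
  have hp0 : ∀ x, 0 < p x := fun x ↦ zero_lt_one.trans_le (hpP x).1
  have hqp : ∀ x, 0 ≤ q x / p x ∧ q x / p x ≤ M := fun x ↦
    ⟨div_nonneg (hqM x).1 (hp0 x).le, (div_le_self (hqM x).1 (hpP x).1).trans (hqM x).2⟩
  have hint_p : Integrable (fun x ↦ 1 / p x) μ :=
    .of_bound (measurable_const.div hp).aestronglyMeasurable 1 (ae_of_all _ fun x ↦ by
      rw [norm_of_nonneg (one_div_nonneg.2 (hp0 x).le)]
      exact div_le_one_of_le₀ (hpP x).1 (hp0 x).le)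
  have hint_qp : Integrable (fun x ↦ q x / p x) μ :=
    .of_bound (hq.div hp).aestronglyMeasurable M
      (ae_of_all _ fun x ↦ by rw [norm_of_nonneg (hqp x).1]; exact (hqp x).2)
  have hint_φ : Integrable (fun x ↦ phiInv (p x) (q x) s) μ :=
    .of_bound (measurable_phiInv hp hq (fun x ↦ (hpP x).1) (fun x ↦ (hqM x).1) s
      ).aestronglyMeasurable (max 1 s) (ae_of_all _ fun x ↦ by
        rw [norm_of_nonneg (phiInv_nonneg _ _ _)]
        exact phiInv_le_max_one s (hpP x).1 (hqM x).1)
  have hpt : ∀ x, s ^ (1 / p x) * L ^ (-(q x / p x)) ≤ 2 ^ M * phiInv (p x) (q x) s :=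
    fun x ↦ rpow_mul_log_rpow_le_two_rpow_mul_phiInv (hpP x).1 (hqM x).1 (hqp x).2 hs
  have hint_exp : Integrable (fun x ↦ s ^ (1 / p x) * L ^ (-(q x / p x))) μ :=
    (hint_φ.const_mul (2 ^ M)).mono'
      ((measurable_const.pow (measurable_const.div hp)).mul
        (measurable_const.pow (hq.div hp).neg)).aestronglyMeasurable
      (ae_of_all _ fun x ↦ by rw [norm_of_nonneg (by positivity)]; exact hpt x)
  have hA : 1 / P ≤ ∫ x, 1 / p x ∂μ := by
    simpa using integral_mono (integrable_const (1 / P)) hint_p fun x ↦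
      one_div_le_one_div_of_le (hp0 x) (hpP x).2
  have hB0 : 0 ≤ ∫ x, q x / p x ∂μ := integral_nonneg fun x ↦ (hqp x).1
  have hBM : ∫ x, q x / p x ∂μ ≤ M := by
    simpa using integral_mono hint_qp (integrable_const M) fun x ↦ (hqp x).2
  calc _ ≤ C * (s ^ (∫ x, 1 / p x ∂μ) * L ^ (-∫ x, q x / p x ∂μ)) :=
        hC s _ _ hs hA hB0 hBM
  _ ≤ C * ∫ x, s ^ (1 / p x) * L ^ (-(q x / p x)) ∂μ := by
        gcongr
        exact rpow_integral_mul_rpow_neg_integral_le hs hL hint_p hint_qp hint_exp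
  _ ≤ C * ∫ x, 2 ^ M * phiInv (p x) (q x) s ∂μ :=
        mul_le_mul_of_nonneg_left (integral_mono hint_exp (hint_φ.const_mul _) hpt) hC0.le
  _ = C * 2 ^ M * ∫ x, phiInv (p x) (q x) s ∂μ := by rw [integral_const_mul, mul_assoc]

lemma continuous_of_abs_sub_le_div {E : Type*} [NormedAddCommGroup E] {f : E → ℝ} {C : ℝ}
    {ω : ℝ → ℝ} (hω : Tendsto ω (𝓝[>] 0) atTop) (hf : ∀ x y, |f x - f y| ≤ C / ω ‖x - y‖) :
    Continuous f := by
  refine continuous_iff_continuousAt.2 fun x ↦ ?_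
  rw [← continuousWithinAt_compl_self, ContinuousWithinAt, tendsto_iff_dist_tendsto_zero]
  exact squeeze_zero (fun _ ↦ dist_nonneg) (fun y ↦ (Real.dist_eq _ _).trans_le (hf y x))
    (tendsto_const_nhds.div_atTop (hω.comp (tendsto_norm_sub_self_nhdsNE x)))

lemma tendsto_log_exp_add_one_div :
    Tendsto (fun d : ℝ ↦ Real.log (Real.exp 1 + 1 / d)) (𝓝[>] 0) atTop := by
  simp only [one_div]
  exact tendsto_log_atTop.comp (tendsto_atTop_add_const_left _ _ tendsto_inv_nhdsGT_zero)

lemma LogHolder.continuous {n : ℕ} {p : Rn n → ℝ} (hp : LogHolder p) : Continuous p := by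
  obtain ⟨C, -, -, hC, -⟩ := hp
  exact continuous_of_abs_sub_le_div tendsto_log_exp_add_one_div hC

lemma LogLogHolder.continuous {n : ℕ} {q : Rn n → ℝ} (hq : LogLogHolder q) : Continuous q := by
  obtain ⟨-, C, -, hC⟩ := hq
  exact continuous_of_abs_sub_le_div
    (tendsto_log_atTop.comp (tendsto_atTop_add_const_left _ _ tendsto_log_exp_add_one_div)) hC

lemma volume_cubeSet {n : ℕ} (c : Rn n) (l : ℝ) :
    volume (cubeSet c l) = ENNReal.ofReal l ^ n := by
  have : cubeSet c l = (MeasurableEquiv.toLp 2 (Fin n → ℝ)).symm ⁻¹'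
      univ.pi fun i ↦ Icc (c i - l / 2) (c i + l / 2) := by
    ext x
    simp only [cubeSet, mem_preimage, Set.mem_pi, mem_univ, forall_true_left, mem_Icc,
      mem_ofPred_eq, MeasurableEquiv.coe_toLp_symm, abs_le]
    refine forall_congr' fun i ↦ ?_
    constructor <;> rintro ⟨h1, h2⟩ <;> constructor <;> linarith
  rw [this, (EuclideanSpace.volume_preserving_symm_measurableEquiv_toLp (Fin n)).measure_preimage
    (MeasurableSet.univ_pi fun _ ↦ measurableSet_Icc).nullMeasurableSet, volume_pi_pi]
  simp_rw [Real.volume_Icc, show ∀ i, c i + l / 2 - (c i - l / 2) = l from fun i ↦ by ring]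
  rw [Finset.prod_const, Finset.card_univ, Fintype.card_fin]

end VarExp

open VarExp in
/-- `φ^{-1}_{1/(1/p)_Q, (q/p)_Q/(1/p)_Q}(1/|Q|) ≲ ⨍_Q φ^{-1}_{p(x),q(x)}(1/|Q|) dx`. -/
theorem statement5 (n : ℕ) (p q : Rn n → ℝ)
    (hp : LogHolder p) (pp : ℝ) (hpbd : ∀ x, 1 ≤ p x ∧ p x ≤ pp)
    (hq : LogLogHolder q) (hq0 : ∀ x, 0 ≤ q x) :
    ∃ C : ℝ, 0 < C ∧ ∀ (c : Rn n) (l : ℝ), 0 < l →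
      phiInv (1 / cavg c l fun x => 1 / p x)
          ((cavg c l fun x => q x / p x) / cavg c l fun x => 1 / p x) (1 / l ^ n) ≤
        C * ⨍ x in cubeSet c l, phiInv (p x) (q x) (1 / l ^ n) := by
  obtain ⟨M, hM⟩ := hq.1
  obtain ⟨C, hC0, hC⟩ := exists_phiInv_integral_le (α := Rn n)
    ((hpbd 0).1.trans (hpbd 0).2) ((abs_nonneg _).trans (hM 0))
  refine ⟨C, hC0, fun c l hl ↦ ?_⟩
  -- averages over the cube are integrals against the normalized restriction of `volume`
  have hQ := volume_cubeSet c l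
  have : IsFiniteMeasure (volume.restrict (cubeSet c l)) :=
    isFiniteMeasure_restrict.2 (by simp [hQ])
  have : NeZero (volume.restrict (cubeSet c l)) := ⟨by simp [hQ, hl]⟩
  exact hC _ p q hp.continuous.measurable hq.continuous.measurable hpbd
    (fun x ↦ ⟨hq0 x, (le_abs_self _).trans (hM x)⟩) _ (by positivity)
end
end

section
/- Let Ψ, Λ, Θ be GΦ-functions on ℝⁿ such that Ψ(x,·) and Λ(x,·) are strictly increasing for every x, and suppose Ψ^{-1}(x,t) Λ^{-1}(x,t) ≤ Θ^{-1}(x,t) for every x ∈ ℝⁿ and every t ≥ 0. Then there is an absolute constant C > 0 such that ‖f g‖_{Θ(·,L)} ≤ C ‖f‖_{Ψ(·,L)} ‖g‖_{Λ(·,L)} for all f ∈ L^{Ψ}(ℝⁿ) and g ∈ L^{Λ}(ℝⁿ). -/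
open MeasureTheory ENNReal NNReal Set

noncomputable section

/-!
For `u, v ≥ 0` put `t = max (Ψ(x,u⁻), Λ(x,v⁻))`. Strict monotonicity gives `u ≤ Ψ⁻¹(x,t)` and
`v ≤ Λ⁻¹(x,t)`, so `uv ≤ Θ⁻¹(x,t)` and hence `Θ(x, uv/2) ≤ t`. Halving once more by convexity,
`Θ(x, |fg|/(4ab)) ≤ (Ψ(x, |f|/a) + Λ(x, |g|/b)) / 2`, whose integral is at most `1` when `a` and `b`
are admissible for `f` and `g`; so `4ab` is admissible for `fg`, and `C = 4` works.
-/

open Filter Topology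

namespace VarExp

variable {n : ℕ}

/-- The left limit `Ψ(x, u⁻)` along rationals: `x ↦ ratLeftLim Ψ x (h x)` is measurable for
measurable `h`, whereas `x ↦ Ψ x (h x)` need not be, `Ψ` being measurable in `x` only for each
fixed `t`. -/
def ratLeftLim (Ψ : Rn n → ℝ → ℝ≥0∞) (x : Rn n) (u : ℝ) : ℝ≥0∞ :=
  ⨆ (q : ℚ) (_ : (q : ℝ) ∈ Ico 0 u), Ψ x q

lemma ratLeftLim_le {Ψ : Rn n → ℝ → ℝ≥0∞} {x : Rn n} (hΨ : MonotoneOn (Ψ x) (Ici 0))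
    {u : ℝ} (hu : 0 ≤ u) : ratLeftLim Ψ x u ≤ Ψ x u :=
  iSup₂_le fun _ hq => hΨ (mem_Ici.2 hq.1) (mem_Ici.2 hu) hq.2.le

lemma lt_ratLeftLim {Ψ : Rn n → ℝ → ℝ≥0∞} {x : Rn n} (hΨ : StrictMonoOn (Ψ x) (Ici 0))
    {u w : ℝ} (hw : 0 ≤ w) (hwu : w < u) : Ψ x w < ratLeftLim Ψ x u := by
  obtain ⟨q, hwq, hqu⟩ := exists_rat_btwn hwu
  have hq : (q : ℝ) ∈ Ico 0 u := ⟨hw.trans hwq.le, hqu⟩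
  calc Ψ x w < Ψ x q := hΨ (mem_Ici.2 hw) (mem_Ici.2 hq.1) hwq
    _ ≤ ratLeftLim Ψ x u := le_iSup₂_of_le (f := fun (q : ℚ) (_ : (q : ℝ) ∈ Ico 0 u) => Ψ x q)
        q hq le_rfl

lemma measurable_ratLeftLim {Ψ : Rn n → ℝ → ℝ≥0∞} (hΨ : ∀ t, Measurable fun x => Ψ x t)
    {h : Rn n → ℝ} (hh : Measurable h) : Measurable fun x => ratLeftLim Ψ x (h x) := by
  refine Measurable.iSup fun q => ?_
  simp only [iSup_eq_if]
  refine Measurable.ite ?_ (hΨ q) measurable_const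
  simp only [mem_Ico, ofPred_and]
  exact (MeasurableSet.const _).inter (measurableSet_lt measurable_const hh)

lemma le_ginv {Ψ : Rn n → ℝ → ℝ≥0∞} {x : Rn n} (hΨ : Tendsto (Ψ x) atTop (𝓝 ⊤))
    {t : ℝ≥0∞} (ht : t ≠ ⊤) {u : ℝ} (h : ∀ w, 0 ≤ w → w < u → Ψ x w < t) :
    u ≤ ginv Ψ x t := by
  obtain ⟨w, hwt, hw⟩ :=
    ((hΨ.eventually (lt_mem_nhds ht.lt_top)).and (eventually_ge_atTop 0)).exists
  refine le_csInf (s := {u | 0 ≤ u ∧ t ≤ Ψ x u}) ⟨w, hw, hwt.le⟩ fun w hw => ?_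
  by_contra! hwu
  exact (h w hw.1 hwu).not_ge hw.2

lemma lt_of_lt_ginv {Θ : Rn n → ℝ → ℝ≥0∞} {x : Rn n} {t : ℝ≥0∞} {w : ℝ} (hw : 0 ≤ w)
    (h : w < ginv Θ x t) : Θ x w < t := by
  by_contra! hwt
  exact (csInf_le (s := {u | 0 ≤ u ∧ t ≤ Θ x u}) ⟨0, fun _ hu => hu.1⟩ ⟨hw, hwt⟩).not_gt h

lemma mul_div_two_le_max {Ψ Λ Θ : Rn n → ℝ → ℝ≥0∞} {x : Rn n}
    (hΨ : Tendsto (Ψ x) atTop (𝓝 ⊤)) (hΛ : Tendsto (Λ x) atTop (𝓝 ⊤))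
    (hmΨ : StrictMonoOn (Ψ x) (Ici 0)) (hmΛ : StrictMonoOn (Λ x) (Ici 0)) (hΘ : Θ x 0 = 0)
    (hinv : ∀ t, ginv Ψ x t * ginv Λ x t ≤ ginv Θ x t) {u v : ℝ} (hu : 0 ≤ u) (hv : 0 ≤ v) :
    Θ x (u * v / 2) ≤ max (ratLeftLim Ψ x u) (ratLeftLim Λ x v) := by
  set t := max (ratLeftLim Ψ x u) (ratLeftLim Λ x v)
  rcases eq_or_ne t ⊤ with ht | ht
  · exact ht ▸ le_top
  rcases (mul_nonneg hu hv).eq_or_lt with huv | huv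
  · simp [← huv, hΘ]
  have hΨt : u ≤ ginv Ψ x t := le_ginv hΨ ht fun w hw hwu =>
    (lt_ratLeftLim hmΨ hw hwu).trans_le (le_max_left _ _)
  have hΛt : v ≤ ginv Λ x t := le_ginv hΛ ht fun w hw hwv =>
    (lt_ratLeftLim hmΛ hw hwv).trans_le (le_max_right _ _)
  refine (lt_of_lt_ginv (by positivity) ?_).le
  calc u * v / 2 < u * v := half_lt_self huv
    _ ≤ ginv Ψ x t * ginv Λ x t := mul_le_mul hΨt hΛt hv (hu.trans hΨt)
    _ ≤ ginv Θ x t := hinv t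

lemma half_le_of_convexOn {φ : ℝ → ℝ≥0∞} (hφ : ConvexOn ℝ≥0 (Ici 0) φ) (h0 : φ 0 = 0)
    {s : ℝ} (hs : 0 ≤ s) : φ (s / 2) ≤ φ s / 2 := by
  have := hφ.2 (mem_Ici.2 hs) (mem_Ici.2 le_rfl) (zero_le : (0 : ℝ≥0) ≤ 2⁻¹)
    (zero_le : (0 : ℝ≥0) ≤ 2⁻¹) (by norm_num)
  rw [ENNReal.div_eq_inv_mul]
  simpa [NNReal.smul_def, ENNReal.smul_def, h0, div_eq_inv_mul, ENNReal.coe_inv] using this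

lemma lintegral_gphi_mul_le {Ψ Λ Θ : Rn n → ℝ → ℝ≥0∞} (hΨ : IsGPhi Ψ) (hΛ : IsGPhi Λ)
    (hΘ : IsGPhi Θ) (hmΨ : ∀ x, StrictMonoOn (Ψ x) (Ici 0))
    (hmΛ : ∀ x, StrictMonoOn (Λ x) (Ici 0))
    (hinv : ∀ x t, ginv Ψ x t * ginv Λ x t ≤ ginv Θ x t) {f g : Rn n → ℝ}
    (hf : Measurable f) {a b : ℝ} (ha : 0 < a) (hb : 0 < b) :
    ∫⁻ x, Θ x (|f x * g x| / (4 * a * b)) ≤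
      ((∫⁻ x, Ψ x (|f x| / a)) + ∫⁻ x, Λ x (|g x| / b)) / 2 := by
  set F := fun x => ratLeftLim Ψ x (|f x| / a)
  set G := fun x => ratLeftLim Λ x (|g x| / b)
  have hpt : ∀ x, Θ x (|f x * g x| / (4 * a * b)) ≤ (F x + G x) / 2 := fun x => by
    have hu : 0 ≤ |f x| / a := by positivity
    have hv : 0 ≤ |g x| / b := by positivity
    have harg : |f x * g x| / (4 * a * b) = |f x| / a * (|g x| / b) / 2 / 2 := by
      rw [abs_mul]; field_simp; ring
    rw [harg]
    calc _ ≤ Θ x (|f x| / a * (|g x| / b) / 2) / 2 :=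
          half_le_of_convexOn (hΘ.2.1 x) (hΘ.2.2.1 x) (by positivity)
      _ ≤ max (F x) (G x) / 2 := by
          gcongr
          exact mul_div_two_le_max (hΨ.2.2.2.2 x) (hΛ.2.2.2.2 x) (hmΨ x) (hmΛ x)
            (hΘ.2.2.1 x) (hinv x) hu hv
      _ ≤ (F x + G x) / 2 := by gcongr; exact max_le_add_of_nonneg zero_le zero_le
  calc _ ≤ ∫⁻ x, (F x + G x) / 2 := lintegral_mono hpt
    _ = ((∫⁻ x, F x) + ∫⁻ x, G x) / 2 := by
        simp only [div_eq_mul_inv]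
        rw [lintegral_mul_const' _ _ (inv_ne_top.2 two_ne_zero),
          lintegral_add_left (measurable_ratLeftLim hΨ.1 (hf.abs.div_const a))]
    _ ≤ _ := by
        gcongr with x x
        · exact ratLeftLim_le (hmΨ x).monotoneOn (by positivity)
        · exact ratLeftLim_le (hmΛ x).monotoneOn (by positivity)

end VarExp

lemma ENNReal.le_mul_sInf_mul_sInf {A B : Set ℝ≥0∞} {x c : ℝ≥0∞} (hc0 : c ≠ 0) (hc : c ≠ ⊤)
    (hA : sInf A ≠ ⊤) (hB : sInf B ≠ ⊤) (h : ∀ a ∈ A, ∀ b ∈ B, x ≤ c * (a * b)) :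
    x ≤ c * (sInf A * sInf B) := by
  rw [mul_comm, ← ENNReal.div_le_iff_le_mul (.inl hc0) (.inl hc), sInf_eq_iInf', sInf_eq_iInf']
  obtain ⟨a, haA, ha⟩ := sInf_lt_iff.1 hA.lt_top
  obtain ⟨b, hbB, hb⟩ := sInf_lt_iff.1 hB.lt_top
  refine le_iInf_mul_iInf ⟨⟨a, haA⟩, ha.ne⟩ ⟨⟨b, hbB⟩, hb.ne⟩ fun a b => ?_
  rw [ENNReal.div_le_iff_le_mul (.inl hc0) (.inl hc), mul_comm]
  exact h a a.2 b b.2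

open VarExp in
/-- generalized Hölder inequality for Musielak–Orlicz norms:
if `Ψ^{-1}(x,t) Λ^{-1}(x,t) ≤ Θ^{-1}(x,t)` then `‖fg‖_Θ ≲ ‖f‖_Ψ ‖g‖_Λ`. -/
theorem statement12 :
    ∃ C : ℝ, 0 < C ∧ ∀ (n : ℕ) (Ψ Λ Θ : Rn n → ℝ → ℝ≥0∞),
      IsGPhi Ψ → IsGPhi Λ → IsGPhi Θ →
      (∀ x, StrictMonoOn (Ψ x) (Set.Ici (0 : ℝ))) →
      (∀ x, StrictMonoOn (Λ x) (Set.Ici (0 : ℝ))) →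
      (∀ (x : Rn n) (t : ℝ≥0∞), ginv Ψ x t * ginv Λ x t ≤ ginv Θ x t) →
      ∀ f g : Rn n → ℝ, Measurable f → Measurable g →
        gnorm Ψ f ≠ ⊤ → gnorm Λ g ≠ ⊤ →
        gnorm Θ (fun x => f x * g x) ≤ ENNReal.ofReal C * (gnorm Ψ f * gnorm Λ g) := by
  refine ⟨4, by norm_num, fun n Ψ Λ Θ hΨ hΛ hΘ hmΨ hmΛ hinv f g hf _ hfin hgin => ?_⟩
  refine ENNReal.le_mul_sInf_mul_sInf (by simp) ofReal_ne_top hfin hgin ?_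
  rintro _ ⟨a, ha, rfl, hfa⟩ _ ⟨b, hb, rfl, hgb⟩
  refine sInf_le ⟨4 * a * b, by positivity, by simp [ENNReal.ofReal_mul, ha.le, mul_assoc], ?_⟩
  calc _ ≤ ((∫⁻ x, Ψ x (|f x| / a)) + ∫⁻ x, Λ x (|g x| / b)) / 2 :=
        lintegral_gphi_mul_le hΨ hΛ hΘ hmΨ hmΛ hinv hf ha hb
    _ ≤ (1 + 1) / 2 := by gcongr
    _ = 1 := by rw [one_add_one_eq_two, ENNReal.div_self two_ne_zero ofNat_ne_top]
end
end

section
/- Let 0 < a⁻ ≤ a⁺ < ∞ and 0 ≤ b⁺ < ∞. Then there exist constants c₁, c₂ > 0, depending only on a⁻, a⁺ and b⁺, such that for all a ∈ [a⁻, a⁺], all b ∈ [0, b⁺] and all t ≥ 0: c₁ t^{1/a} (log(e + t))^{-b/a} ≤ φ^{-1}_{a,b}(t) ≤ c₂ t^{1/a} (log(e + t))^{-b/a}. -/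
open MeasureTheory ENNReal NNReal Set

noncomputable section

namespace Stmt13

lemma one_le_L {t : ℝ} (ht : 0 ≤ t) : 1 ≤ Real.log (Real.exp 1 + t) := by
  have h := Real.log_le_log (Real.exp_pos 1) (by linarith : Real.exp 1 ≤ Real.exp 1 + t)
  rwa [Real.log_exp] at h

lemma two_le_e : (2:ℝ) ≤ Real.exp 1 := by
  have := Real.add_one_le_exp (1:ℝ); linarith

lemma one_le_rpow' {x y : ℝ} (hx : 1 ≤ x) (hy : 0 ≤ y) : 1 ≤ x ^ y := by
  calc (1:ℝ) = x ^ (0:ℝ) := (Real.rpow_zero x).symm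
    _ ≤ x ^ y := Real.rpow_le_rpow_of_exponent_le hx hy

lemma one_le_rpow_nonpos {x y : ℝ} (hx0 : 0 < x) (hx : x ≤ 1) (hy : y ≤ 0) : 1 ≤ x ^ y := by
  calc (1:ℝ) = x ^ (0:ℝ) := (Real.rpow_zero x).symm
    _ ≤ x ^ y := Real.rpow_le_rpow_of_exponent_ge hx0 hx hy

lemma log_le_rpow_div {x θ : ℝ} (hx : 1 ≤ x) (hθ : 0 < θ) :
    Real.log x ≤ x ^ θ / θ := by
  have hx0 : (0:ℝ) < x := lt_of_lt_of_le one_pos hx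
  have h1 := Real.log_le_sub_one_of_pos (Real.rpow_pos_of_pos hx0 θ)
  rw [Real.log_rpow hx0] at h1
  rw [le_div_iff₀ hθ]
  nlinarith [Real.rpow_pos_of_pos hx0 θ]

lemma lemA {am a t : ℝ} (ham : 0 < am) (haa : am ≤ a) (ht : 0 ≤ t) :
    Real.log (Real.exp 1 + t ^ (1/a)) ≤ (2 + 1/am) * Real.log (Real.exp 1 + t) := by
  have ha0 : 0 < a := lt_of_lt_of_le ham haa
  have hLt := one_le_L ht
  have hinv : (0:ℝ) ≤ 1/am := by positivity
  have he := two_le_e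
  rcases le_total t 1 with h1 | h1
  · have hs : t ^ (1/a) ≤ 1 := Real.rpow_le_one ht h1 (by positivity)
    have hs0 : (0:ℝ) ≤ t ^ (1/a) := Real.rpow_nonneg ht _
    have h2 : Real.exp 1 + t ^ (1/a) ≤ Real.exp 1 * Real.exp 1 := by nlinarith
    have h3 : Real.log (Real.exp 1 + t ^ (1/a)) ≤ Real.log (Real.exp 1 * Real.exp 1) :=
      Real.log_le_log (by positivity) h2
    have h4 : Real.log (Real.exp 1 * Real.exp 1) = 2 := by
      rw [← Real.exp_add, Real.log_exp]; norm_num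
    rw [h4] at h3
    nlinarith
  · have het1 : (1:ℝ) ≤ Real.exp 1 + t := by linarith
    have hr1 : (1:ℝ) ≤ max 1 (1/am) := le_max_left _ _
    have h2 : t ^ (1/a) ≤ t ^ (1/am) :=
      Real.rpow_le_rpow_of_exponent_le h1 (one_div_le_one_div_of_le ham haa)
    have h3 : t ^ (1/am) ≤ (Real.exp 1 + t) ^ (1/am) :=
      Real.rpow_le_rpow ht (by linarith [Real.exp_pos 1]) (by positivity)
    have h4 : (Real.exp 1 + t) ^ (1/am) ≤ (Real.exp 1 + t) ^ (max 1 (1/am)) :=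
      Real.rpow_le_rpow_of_exponent_le het1 (le_max_right _ _)
    have h5 : Real.exp 1 ≤ (Real.exp 1 + t) ^ (max 1 (1/am)) := by
      calc Real.exp 1 ≤ Real.exp 1 + t := by linarith
        _ = (Real.exp 1 + t) ^ (1:ℝ) := (Real.rpow_one _).symm
        _ ≤ _ := Real.rpow_le_rpow_of_exponent_le het1 hr1
    have h6 : Real.exp 1 + t ^ (1/a) ≤ 2 * (Real.exp 1 + t) ^ (max 1 (1/am)) := by linarith
    have hpos : (0:ℝ) < (Real.exp 1 + t) ^ (max 1 (1/am)) :=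
      Real.rpow_pos_of_pos (by linarith) _
    have h7 : Real.log (Real.exp 1 + t ^ (1/a)) ≤
        Real.log (2 * (Real.exp 1 + t) ^ (max 1 (1/am))) := by
      apply Real.log_le_log _ h6
      have := Real.rpow_nonneg ht (1/a)
      linarith [Real.exp_pos 1]
    rw [Real.log_mul two_ne_zero (ne_of_gt hpos), Real.log_rpow (by linarith)] at h7
    have hlog2 : Real.log 2 ≤ 1 := by
      have h := Real.log_le_log two_pos two_le_e
      rwa [Real.log_exp] at h
    have hrle : max 1 (1/am) ≤ 1 + 1/am := by
      apply max_le <;> linarith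
    have hL0 : (0:ℝ) ≤ Real.log (Real.exp 1 + t) := by linarith
    nlinarith [mul_le_mul_of_nonneg_right hrle hL0]

set_option maxHeartbeats 1000000 in
lemma lemC {am ap bp : ℝ} (ham : 0 < am) (hamap : am ≤ ap) (hbp : 0 ≤ bp) :
    ∃ ε : ℝ, 0 < ε ∧ ε ≤ 1 ∧ ∀ a b t : ℝ, am ≤ a → a ≤ ap → 0 ≤ b → b ≤ bp → 0 ≤ t →
      ε * Real.log (Real.exp 1 + t) ≤
        Real.log (Real.exp 1 + t ^ (1/a) * Real.log (Real.exp 1 + t) ^ (-(b/a))) := by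
  have hap : 0 < ap := lt_of_lt_of_le ham hamap
  set θ : ℝ := 1 / (2*(bp+1)) with hθdef
  have hθ : 0 < θ := by positivity
  have hθ1 : θ ≤ 1 := by rw [hθdef, div_le_one (by positivity)]; linarith
  have hθbp : θ * bp ≤ 1/2 := by
    rw [hθdef]
    rw [div_mul_eq_mul_div, one_mul, div_le_iff₀ (by positivity)]
    nlinarith
  have hb2pos : (0:ℝ) < θ ^ bp / 2 := by positivity
  have hb2le : θ ^ bp / 2 ≤ 1 := by
    have : θ ^ bp ≤ 1 := Real.rpow_le_one (le_of_lt hθ) hθ1 hbp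
    linarith
  set κ : ℝ := (θ ^ bp / 2) ^ (1/am) with hκdef
  have hκpos : 0 < κ := Real.rpow_pos_of_pos hb2pos _
  set M : ℝ := max (4*ap*Real.log κ⁻¹) 2 with hMdef
  have hM2 : (2:ℝ) ≤ M := le_max_right _ _
  refine ⟨min (1/(4*ap)) (1/M), lt_min (by positivity) (by positivity), ?_, ?_⟩
  · have : 1/M ≤ 1 := by rw [div_le_one (by linarith)]; linarith
    exact le_trans (min_le_right _ _) this
  intro a b t haa hax hb0 hbb ht
  have ha0 : 0 < a := lt_of_lt_of_le ham haa
  have hLt : 1 ≤ Real.log (Real.exp 1 + t) := one_le_L ht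
  have hLt0 : (0:ℝ) ≤ Real.log (Real.exp 1 + t) := by linarith
  have hs0 : (0:ℝ) ≤ t ^ (1/a) * Real.log (Real.exp 1 + t) ^ (-(b/a)) :=
    mul_nonneg (Real.rpow_nonneg ht _) (Real.rpow_nonneg hLt0 _)
  have hLs : 1 ≤ Real.log (Real.exp 1 + t ^ (1/a) * Real.log (Real.exp 1 + t) ^ (-(b/a))) :=
    one_le_L hs0
  by_cases hc : Real.log (Real.exp 1 + t) ≤ M
  · have h1 : min (1/(4*ap)) (1/M) * Real.log (Real.exp 1 + t) ≤ (1/M) * M :=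
      mul_le_mul (min_le_right _ _) hc hLt0 (by positivity)
    rw [one_div_mul_cancel (by linarith : M ≠ 0)] at h1
    linarith
  push_neg at hc
  have hpos0 : (0:ℝ) < Real.exp 1 + t := by linarith [Real.exp_pos 1]
  have het1 : (1:ℝ) ≤ Real.exp 1 + t := by linarith [two_le_e]
  have he2 : Real.exp 2 = Real.exp 1 * Real.exp 1 := by rw [← Real.exp_add]; norm_num
  have hexp2 : Real.exp 2 ≤ Real.exp 1 + t := by
    have h := Real.exp_le_exp.mpr (le_of_lt (lt_of_le_of_lt hM2 hc))
    rwa [Real.exp_log hpos0] at h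
  have hte : Real.exp 1 ≤ t := by nlinarith [two_le_e]
  -- bound (log(e+t))^b from above
  have hθbpos : (0:ℝ) < θ ^ bp := Real.rpow_pos_of_pos hθ bp
  have hpow1 : (0:ℝ) < (Real.exp 1 + t) ^ (θ*bp) := Real.rpow_pos_of_pos hpos0 _
  have hLb : Real.log (Real.exp 1 + t) ^ b ≤ (Real.exp 1 + t) ^ (θ*bp) * (θ ^ bp)⁻¹ := by
    have h1 : Real.log (Real.exp 1 + t) ≤ (Real.exp 1 + t) ^ θ / θ := log_le_rpow_div het1 hθ
    have h2 : Real.log (Real.exp 1 + t) ^ b ≤ ((Real.exp 1 + t) ^ θ / θ) ^ b :=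
      Real.rpow_le_rpow hLt0 h1 hb0
    have h3 : ((Real.exp 1 + t) ^ θ / θ) ^ b = (Real.exp 1 + t) ^ (θ*b) * (θ⁻¹) ^ b := by
      rw [div_eq_mul_inv, Real.mul_rpow (by positivity) (by positivity),
        ← Real.rpow_mul (le_of_lt hpos0)]
    have h1θ : (1:ℝ) ≤ θ⁻¹ := (one_le_inv₀ hθ).mpr hθ1
    have h5 : (Real.exp 1 + t) ^ (θ*b) ≤ (Real.exp 1 + t) ^ (θ*bp) :=
      Real.rpow_le_rpow_of_exponent_le het1 (by nlinarith)
    have h6 : (θ⁻¹) ^ b ≤ (θ⁻¹) ^ bp := Real.rpow_le_rpow_of_exponent_le h1θ hbb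
    have h7 : (θ⁻¹) ^ bp = (θ ^ bp)⁻¹ := Real.inv_rpow (le_of_lt hθ) bp
    calc Real.log (Real.exp 1 + t) ^ b ≤ (Real.exp 1 + t) ^ (θ*b) * (θ⁻¹) ^ b := by
          rw [← h3]; exact h2
      _ ≤ (Real.exp 1 + t) ^ (θ*bp) * (θ⁻¹) ^ bp := by
          apply mul_le_mul h5 h6 (Real.rpow_nonneg (by positivity) _) (le_of_lt hpow1)
      _ = _ := by rw [h7]
  have hLbpos : (0:ℝ) < Real.log (Real.exp 1 + t) ^ b := Real.rpow_pos_of_pos (by linarith) b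
  have hLnb : θ ^ bp * (Real.exp 1 + t) ^ (-(θ*bp)) ≤ Real.log (Real.exp 1 + t) ^ (-b) := by
    rw [Real.rpow_neg hLt0, Real.rpow_neg (le_of_lt hpos0)]
    have key : θ ^ bp * Real.log (Real.exp 1 + t) ^ b ≤ (Real.exp 1 + t) ^ (θ*bp) := by
      calc θ ^ bp * Real.log (Real.exp 1 + t) ^ b
          ≤ θ ^ bp * ((Real.exp 1 + t) ^ (θ*bp) * (θ ^ bp)⁻¹) :=
            mul_le_mul_of_nonneg_left hLb (le_of_lt hθbpos)
        _ = (Real.exp 1 + t) ^ (θ*bp) := by field_simp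
    rw [← div_eq_mul_inv, ← one_div, div_le_div_iff₀ hpow1 hLbpos]
    linarith [key]
  -- lower bound on s
  have hsform : (t * Real.log (Real.exp 1 + t) ^ (-b)) ^ (1/a)
      = t ^ (1/a) * Real.log (Real.exp 1 + t) ^ (-(b/a)) := by
    rw [Real.mul_rpow ht (Real.rpow_nonneg hLt0 _), ← Real.rpow_mul hLt0, neg_mul, mul_one_div]
  have h2' : (Real.exp 1 + t) ^ (1 - θ*bp) = (Real.exp 1 + t) * (Real.exp 1 + t) ^ (-(θ*bp)) := by
    rw [show (1 - θ*bp) = 1 + (-(θ*bp)) by ring, Real.rpow_add hpos0, Real.rpow_one]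
  have h3' : (Real.exp 1 + t) ^ ((1:ℝ)/2) ≤ (Real.exp 1 + t) ^ (1 - θ*bp) :=
    Real.rpow_le_rpow_of_exponent_le het1 (by linarith)
  have hstep : (θ ^ bp / 2) * (Real.exp 1 + t) ^ ((1:ℝ)/2)
      ≤ t * Real.log (Real.exp 1 + t) ^ (-b) := by
    have h1 : (Real.exp 1 + t)/2 ≤ t := by linarith
    have hA : ((Real.exp 1 + t)/2) * (θ ^ bp * (Real.exp 1 + t) ^ (-(θ*bp)))
        ≤ t * Real.log (Real.exp 1 + t) ^ (-b) := by
      apply mul_le_mul h1 hLnb _ (by linarith)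
      positivity
    have hB : (θ ^ bp / 2) * (Real.exp 1 + t) ^ ((1:ℝ)/2)
        ≤ ((Real.exp 1 + t)/2) * (θ ^ bp * (Real.exp 1 + t) ^ (-(θ*bp))) := by
      rw [show ((Real.exp 1 + t)/2) * (θ ^ bp * (Real.exp 1 + t) ^ (-(θ*bp)))
        = (θ ^ bp/2) * ((Real.exp 1 + t) * (Real.exp 1 + t) ^ (-(θ*bp))) by ring, ← h2']
      exact mul_le_mul_of_nonneg_left h3' (by positivity)
    exact le_trans hB hA
  have hsge : κ * (Real.exp 1 + t) ^ (1/(2*ap))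
      ≤ t ^ (1/a) * Real.log (Real.exp 1 + t) ^ (-(b/a)) := by
    have h4 : ((θ ^ bp/2) * (Real.exp 1 + t) ^ ((1:ℝ)/2)) ^ (1/a)
        ≤ (t * Real.log (Real.exp 1 + t) ^ (-b)) ^ (1/a) :=
      Real.rpow_le_rpow (by positivity) hstep (by positivity)
    have h5 : ((θ ^ bp/2) * (Real.exp 1 + t) ^ ((1:ℝ)/2)) ^ (1/a)
        = (θ ^ bp/2) ^ (1/a) * (Real.exp 1 + t) ^ ((1/2)*(1/a)) := by
      rw [Real.mul_rpow (by positivity) (by positivity), ← Real.rpow_mul (le_of_lt hpos0)]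
    have h6 : κ ≤ (θ ^ bp/2) ^ (1/a) := by
      rw [hκdef]
      exact Real.rpow_le_rpow_of_exponent_ge hb2pos hb2le (one_div_le_one_div_of_le ham haa)
    have h7 : (Real.exp 1 + t) ^ (1/(2*ap)) ≤ (Real.exp 1 + t) ^ ((1/2)*(1/a)) := by
      apply Real.rpow_le_rpow_of_exponent_le het1
      rw [show (1/2)*(1/a) = 1/(2*a) by ring]
      exact one_div_le_one_div_of_le (by linarith) (by linarith)
    calc κ * (Real.exp 1 + t) ^ (1/(2*ap))
        ≤ (θ ^ bp/2) ^ (1/a) * (Real.exp 1 + t) ^ ((1/2)*(1/a)) :=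
          mul_le_mul h6 h7 (Real.rpow_nonneg (le_of_lt hpos0) _) (Real.rpow_nonneg (by positivity) _)
      _ = _ := h5.symm
      _ ≤ _ := h4
      _ = _ := hsform
  have hκt : (0:ℝ) < κ * (Real.exp 1 + t) ^ (1/(2*ap)) := by positivity
  have hlogs : Real.log κ + (1/(2*ap)) * Real.log (Real.exp 1 + t)
      ≤ Real.log (Real.exp 1 + t ^ (1/a) * Real.log (Real.exp 1 + t) ^ (-(b/a))) := by
    have h8 : Real.log (κ * (Real.exp 1 + t) ^ (1/(2*ap)))
        ≤ Real.log (Real.exp 1 + t ^ (1/a) * Real.log (Real.exp 1 + t) ^ (-(b/a))) :=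
      Real.log_le_log hκt (by linarith [Real.exp_pos 1])
    rwa [Real.log_mul (ne_of_gt hκpos) (by positivity), Real.log_rpow hpos0] at h8
  have hkey : 4*ap*(-(Real.log κ)) ≤ Real.log (Real.exp 1 + t) := by
    rw [← Real.log_inv]
    calc 4*ap*Real.log κ⁻¹ ≤ M := le_max_left _ _
      _ ≤ _ := le_of_lt hc
  have h11 : -(Real.log κ) ≤ (1/(4*ap)) * Real.log (Real.exp 1 + t) := by
    have h12 := mul_le_mul_of_nonneg_left hkey (le_of_lt (show (0:ℝ) < 1/(4*ap) by positivity))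
    calc -(Real.log κ) = (1/(4*ap)) * (4*ap*(-(Real.log κ))) := by field_simp
      _ ≤ _ := h12
  have h9 : min (1/(4*ap)) (1/M) * Real.log (Real.exp 1 + t)
      ≤ (1/(4*ap)) * Real.log (Real.exp 1 + t) :=
    mul_le_mul_of_nonneg_right (min_le_left _ _) hLt0
  have hhalf : (1/(2*ap)) * Real.log (Real.exp 1 + t)
      = (1/(4*ap)) * Real.log (Real.exp 1 + t) + (1/(4*ap)) * Real.log (Real.exp 1 + t) := by
    field_simp; ring
  linarith

end Stmt13

open VarExp in
/-- `φ^{-1}_{a,b}(t) ≃ t^{1/a} (log(e+t))^{-b/a}` uniformly for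
`a ∈ [a⁻, a⁺]`, `b ∈ [0, b⁺]`. -/
theorem statement13 (am ap bp : ℝ) (ham : 0 < am) (hamap : am ≤ ap) (hbp : 0 ≤ bp) :
    ∃ c₁ c₂ : ℝ, 0 < c₁ ∧ 0 < c₂ ∧
      ∀ a b t : ℝ, a ∈ Set.Icc am ap → b ∈ Set.Icc 0 bp → 0 ≤ t →
        c₁ * t ^ (1 / a) * Real.log (Real.exp 1 + t) ^ (-(b / a)) ≤ phiInv a b t ∧
        phiInv a b t ≤ c₂ * t ^ (1 / a) * Real.log (Real.exp 1 + t) ^ (-(b / a)) := by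
  have hap : 0 < ap := lt_of_lt_of_le ham hamap
  obtain ⟨ε, hε0, hε1, hεC⟩ := Stmt13.lemC ham hamap hbp
  have hinv : (0:ℝ) ≤ 1/am := by positivity
  have hC1 : (1:ℝ) ≤ 2 + 1/am := by linarith
  have hC0 : (0:ℝ) < 2 + 1/am := by linarith
  refine ⟨min 1 ((2 + 1/am) ^ (-(bp/am))), ε ^ (-(bp/am)),
    lt_min one_pos (Real.rpow_pos_of_pos hC0 _), Real.rpow_pos_of_pos hε0 _, ?_⟩
  intro a b t ha hb ht
  obtain ⟨haa, hax⟩ := ha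
  obtain ⟨hb0, hbb⟩ := hb
  have ha0 : 0 < a := lt_of_lt_of_le ham haa
  have hL1 : 1 ≤ Real.log (Real.exp 1 + t) := Stmt13.one_le_L ht
  have hL0 : (0:ℝ) ≤ Real.log (Real.exp 1 + t) := by linarith
  have hLb0 : (0:ℝ) ≤ Real.log (Real.exp 1 + t) ^ (-(b/a)) := Real.rpow_nonneg hL0 _
  have ht1a : (0:ℝ) ≤ t ^ (1/a) := Real.rpow_nonneg ht _
  have hba : (0:ℝ) ≤ b/a := by positivity
  have hSne : Set.Nonempty {u : ℝ | 0 ≤ u ∧ t ≤ phiab a b u} := by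
    refine ⟨max 1 (t ^ (1/am)), le_trans zero_le_one (le_max_left _ _), ?_⟩
    have hu1 : (1:ℝ) ≤ max 1 (t ^ (1/am)) := le_max_left _ _
    have hu0 : (0:ℝ) ≤ max 1 (t ^ (1/am)) := by linarith
    have h1 : t ≤ (max 1 (t ^ (1/am))) ^ a := by
      calc t = (t ^ (1/am)) ^ am := by
            rw [← Real.rpow_mul ht, one_div_mul_cancel (ne_of_gt ham), Real.rpow_one]
        _ ≤ (max 1 (t ^ (1/am))) ^ am :=
            Real.rpow_le_rpow (Real.rpow_nonneg ht _) (le_max_right _ _) (le_of_lt ham)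
        _ ≤ _ := Real.rpow_le_rpow_of_exponent_le hu1 haa
    have h2 : (1:ℝ) ≤ Real.log (Real.exp 1 + max 1 (t ^ (1/am))) ^ b :=
      Stmt13.one_le_rpow' (Stmt13.one_le_L hu0) hb0
    show t ≤ (max 1 (t ^ (1/am))) ^ a * Real.log (Real.exp 1 + max 1 (t ^ (1/am))) ^ b
    calc t ≤ (max 1 (t ^ (1/am))) ^ a := h1
      _ ≤ _ := le_mul_of_one_le_right (Real.rpow_nonneg hu0 _) h2
  constructor
  · -- lower bound
    rw [phiInv]
    apply le_csInf hSne
    rintro u ⟨hu0, hphi⟩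
    rw [phiab] at hphi
    rcases le_total (t ^ (1/a)) u with hcase | hcase
    · have hLneg : Real.log (Real.exp 1 + t) ^ (-(b/a)) ≤ 1 :=
        Real.rpow_le_one_of_one_le_of_nonpos hL1 (by linarith)
      have hmin1 : min 1 ((2 + 1/am) ^ (-(bp/am))) ≤ 1 := min_le_left _ _
      calc min 1 ((2 + 1/am) ^ (-(bp/am))) * t ^ (1/a) * Real.log (Real.exp 1 + t) ^ (-(b/a))
          ≤ 1 * t ^ (1/a) * 1 := by
            apply mul_le_mul (mul_le_mul hmin1 le_rfl ht1a zero_le_one) hLneg hLb0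
            nlinarith
        _ = t ^ (1/a) := by ring
        _ ≤ u := hcase
    · rcases eq_or_lt_of_le ht with ht0 | ht0
      · rw [← ht0, Real.zero_rpow (one_div_ne_zero (ne_of_gt ha0))]
        simpa using hu0
      · have hu0' : 0 < u := by
          by_contra h
          push_neg at h
          have hu00 : u = 0 := le_antisymm h hu0
          rw [hu00, Real.zero_rpow (ne_of_gt ha0), zero_mul] at hphi
          linarith
        have hLu : Real.log (Real.exp 1 + u) ≤ (2 + 1/am) * Real.log (Real.exp 1 + t) := by
          calc Real.log (Real.exp 1 + u) ≤ Real.log (Real.exp 1 + t ^ (1/a)) :=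
              Real.log_le_log (by linarith [Real.exp_pos 1]) (by linarith)
            _ ≤ _ := Stmt13.lemA ham haa ht
        have hCL0 : (0:ℝ) < (2 + 1/am) * Real.log (Real.exp 1 + t) := by nlinarith
        have hPpos : (0:ℝ) < ((2 + 1/am) * Real.log (Real.exp 1 + t)) ^ b :=
          Real.rpow_pos_of_pos hCL0 b
        have hLu0 : (0:ℝ) ≤ Real.log (Real.exp 1 + u) := by
          have := Stmt13.one_le_L hu0; linarith
        have h1 : Real.log (Real.exp 1 + u) ^ b
            ≤ ((2 + 1/am) * Real.log (Real.exp 1 + t)) ^ b :=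
          Real.rpow_le_rpow hLu0 hLu hb0
        have h2 : t ≤ u ^ a * ((2 + 1/am) * Real.log (Real.exp 1 + t)) ^ b :=
          le_trans hphi (mul_le_mul_of_nonneg_left h1 (Real.rpow_nonneg hu0 a))
        have h3 : t / ((2 + 1/am) * Real.log (Real.exp 1 + t)) ^ b ≤ u ^ a :=
          (div_le_iff₀ hPpos).mpr h2
        have h4 : (t / ((2 + 1/am) * Real.log (Real.exp 1 + t)) ^ b) ^ (1/a)
            ≤ (u ^ a) ^ (1/a) :=
          Real.rpow_le_rpow (by positivity) h3 (by positivity)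
        have h5 : (u ^ a) ^ (1/a) = u := by
          rw [← Real.rpow_mul hu0, mul_one_div_cancel (ne_of_gt ha0), Real.rpow_one]
        have h6 : (t / ((2 + 1/am) * Real.log (Real.exp 1 + t)) ^ b) ^ (1/a)
            = t ^ (1/a) * ((2 + 1/am) ^ (-(b/a)) * Real.log (Real.exp 1 + t) ^ (-(b/a))) := by
          rw [div_eq_mul_inv, ← Real.rpow_neg (le_of_lt hCL0) b,
            Real.mul_rpow ht (Real.rpow_nonneg (le_of_lt hCL0) _),
            ← Real.rpow_mul (le_of_lt hCL0), neg_mul, mul_one_div,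
            Real.mul_rpow (le_of_lt hC0) hL0]
        have h7 : t ^ (1/a) * ((2 + 1/am) ^ (-(b/a)) * Real.log (Real.exp 1 + t) ^ (-(b/a))) ≤ u := by
          rw [← h6, ← h5]; exact h4
        have h8 : (2 + 1/am) ^ (-(bp/am)) ≤ (2 + 1/am) ^ (-(b/a)) := by
          apply Real.rpow_le_rpow_of_exponent_le hC1
          have : b/a ≤ bp/am := div_le_div₀ hbp hbb ham haa
          linarith
        calc min 1 ((2 + 1/am) ^ (-(bp/am))) * t ^ (1/a) * Real.log (Real.exp 1 + t) ^ (-(b/a))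
            ≤ (2 + 1/am) ^ (-(b/a)) * t ^ (1/a) * Real.log (Real.exp 1 + t) ^ (-(b/a)) := by
              apply mul_le_mul_of_nonneg_right
                (mul_le_mul_of_nonneg_right (le_trans (min_le_right _ _) h8) ht1a) hLb0
          _ = t ^ (1/a) * ((2 + 1/am) ^ (-(b/a)) * Real.log (Real.exp 1 + t) ^ (-(b/a))) := by
              ring
          _ ≤ u := h7
  · -- upper bound
    have hc2 : (1:ℝ) ≤ ε ^ (-(bp/am)) := Stmt13.one_le_rpow_nonpos hε0 hε1 (by
      have : (0:ℝ) ≤ bp/am := by positivity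
      linarith)
    have hc2nn : (0:ℝ) ≤ ε ^ (-(bp/am)) := by linarith
    have hs0 : (0:ℝ) ≤ t ^ (1/a) * Real.log (Real.exp 1 + t) ^ (-(b/a)) :=
      mul_nonneg ht1a hLb0
    have hu0 : (0:ℝ) ≤ ε ^ (-(bp/am)) * t ^ (1/a) * Real.log (Real.exp 1 + t) ^ (-(b/a)) := by
      rw [mul_assoc]; exact mul_nonneg hc2nn hs0
    rw [phiInv]
    apply csInf_le ⟨0, fun v hv => hv.1⟩
    refine ⟨hu0, ?_⟩
    rw [phiab]
    set u : ℝ := ε ^ (-(bp/am)) * t ^ (1/a) * Real.log (Real.exp 1 + t) ^ (-(b/a)) with hudef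
    have hsu : t ^ (1/a) * Real.log (Real.exp 1 + t) ^ (-(b/a)) ≤ u := by
      rw [hudef, mul_assoc]
      exact le_mul_of_one_le_left hs0 hc2
    have hse : ε * Real.log (Real.exp 1 + t)
        ≤ Real.log (Real.exp 1 + t ^ (1/a) * Real.log (Real.exp 1 + t) ^ (-(b/a))) :=
      hεC a b t haa hax hb0 hbb ht
    have hLu : ε * Real.log (Real.exp 1 + t) ≤ Real.log (Real.exp 1 + u) := by
      refine le_trans hse (Real.log_le_log ?_ (by linarith))
      linarith [Real.exp_pos 1]
    have hεL0 : (0:ℝ) ≤ ε * Real.log (Real.exp 1 + t) := by positivity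
    have hLub : (ε * Real.log (Real.exp 1 + t)) ^ b ≤ Real.log (Real.exp 1 + u) ^ b :=
      Real.rpow_le_rpow hεL0 hLu hb0
    have hmulr : (ε * Real.log (Real.exp 1 + t)) ^ b
        = ε ^ b * Real.log (Real.exp 1 + t) ^ b := Real.mul_rpow (le_of_lt hε0) hL0
    have hua : u ^ a = (ε ^ (-(bp/am))) ^ a * (t * Real.log (Real.exp 1 + t) ^ (-b)) := by
      rw [hudef, mul_assoc,
        Real.mul_rpow hc2nn hs0, Real.mul_rpow ht1a hLb0,
        ← Real.rpow_mul ht, one_div_mul_cancel (ne_of_gt ha0), Real.rpow_one,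
        ← Real.rpow_mul hL0, neg_mul, div_mul_cancel₀ b (ne_of_gt ha0)]
    have hLbinv : Real.log (Real.exp 1 + t) ^ (-b) * Real.log (Real.exp 1 + t) ^ b = 1 := by
      rw [Real.rpow_neg hL0]
      exact inv_mul_cancel₀ (ne_of_gt (Real.rpow_pos_of_pos (by linarith) b))
    have h3 : (1:ℝ) ≤ (ε ^ (-(bp/am))) ^ a * ε ^ b := by
      have ha1 : (ε ^ (-(bp/am))) ^ am ≤ (ε ^ (-(bp/am))) ^ a :=
        Real.rpow_le_rpow_of_exponent_le hc2 haa
      have ha2 : (ε ^ (-(bp/am))) ^ am = ε ^ (-bp) := by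
        rw [← Real.rpow_mul (le_of_lt hε0)]
        congr 1
        field_simp
      have ha3 : ε ^ bp ≤ ε ^ b := Real.rpow_le_rpow_of_exponent_ge hε0 hε1 hbb
      have ha4 : ε ^ (-bp) * ε ^ bp = 1 := by
        rw [← Real.rpow_add hε0]; simp
      calc (1:ℝ) = ε ^ (-bp) * ε ^ bp := ha4.symm
        _ ≤ (ε ^ (-(bp/am))) ^ a * ε ^ b := by
            apply mul_le_mul (by rw [← ha2]; exact ha1) ha3
              (Real.rpow_nonneg (le_of_lt hε0) _)
              (Real.rpow_nonneg (Real.rpow_nonneg (le_of_lt hε0) _) _)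
    calc t = 1 * t := (one_mul t).symm
      _ ≤ ((ε ^ (-(bp/am))) ^ a * ε ^ b) * t := mul_le_mul_of_nonneg_right h3 ht
      _ = ((ε ^ (-(bp/am))) ^ a * (t * Real.log (Real.exp 1 + t) ^ (-b)))
          * (ε ^ b * Real.log (Real.exp 1 + t) ^ b) := by
            rw [show ((ε ^ (-(bp/am))) ^ a * (t * Real.log (Real.exp 1 + t) ^ (-b)))
              * (ε ^ b * Real.log (Real.exp 1 + t) ^ b)
              = ((ε ^ (-(bp/am))) ^ a * ε ^ b) * t
                * (Real.log (Real.exp 1 + t) ^ (-b) * Real.log (Real.exp 1 + t) ^ b) by ring,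
              hLbinv, mul_one]
      _ ≤ u ^ a * Real.log (Real.exp 1 + u) ^ b := by
            rw [hua, ← hmulr]
            apply mul_le_mul_of_nonneg_left hLub
            exact mul_nonneg (Real.rpow_nonneg hc2nn _)
              (mul_nonneg ht (Real.rpow_nonneg hL0 _))
end
end
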